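/- Fix integers d ≥ 1 and k ≥ 1. Consider systems A, B_1, …, B_k each of dimension d, and systems A', B'_1, …, B'_k with the B'_i mutually isomorphic. Let U^0, …, U^{d−1} be unitaries on A' ⊗ B', and for each i ∈ {1,…,k} let V_{AB_iA'B'_i} = Σ_{m=0}^{d−1} |m⟩⟨m|_A ⊗ I_{B_i} ⊗ U^m_{A'B'_i}, acting as the identity on all remaining systems. For each i, let |φ^i⟩ be a unit vector on A' ⊗ B'_1⋯B'_k ⊗ (B_1⋯B_k with B_i omitted), and define |Ψ⟩ = Σ_{i=1}^k V_{AB_iA'B'_i}(|Φ^d⟩_{AB_i} ⊗ |φ^i⟩). Then ⟨Ψ|Ψ⟩ ≤ k(1 + (k−1)/d). -/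

import Mathlib

open scoped Matrix Kronecker BigOperators ComplexOrder
open Matrix

attribute [local instance] Classical.propDecidable

noncomputable section

/-- A quantum state: a positive semidefinite complex matrix with unit trace. -/
def IsState {n : Type*} [Fintype n] (ρ : Matrix n n ℂ) : Prop :=
  ρ.PosSemidef ∧ ρ.trace = 1

/-- The unitary permuting `k` copies of `B` according to a permutation `π ∈ S_k`. -/
def permMatrix (B : Type*) {k : ℕ} (π : Equiv.Perm (Fin k)) :
    Matrix (Fin k → B) (Fin k → B) ℂ :=
  Matrix.of fun f g => if f = g ∘ π then 1 else 0

/-- Partial trace over all `k` copies of `B` except the copy indexed by `i0`. -/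
def marginalAt {A B : Type*} [Fintype B] {k : ℕ} (i0 : Fin k)
    (ω : Matrix (A × (Fin k → B)) (A × (Fin k → B)) ℂ) : Matrix (A × B) (A × B) ℂ :=
  Matrix.of fun p q =>
    ∑ f : Fin k → B, if f i0 = p.2 then ω (p.1, f) (q.1, Function.update f i0 q.2) else 0

/-- `k`-extendibility of a bipartite state with respect to the partition `A : B`. -/
def IsKExtendible {A B : Type*} [Fintype A] [DecidableEq A] [Fintype B]
    {k : ℕ} (hk : 0 < k) (σ : Matrix (A × B) (A × B) ℂ) : Prop :=
  ∃ ω : Matrix (A × (Fin k → B)) (A × (Fin k → B)) ℂ,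
    IsState ω ∧
    marginalAt ⟨0, hk⟩ ω = σ ∧
    ∀ π : Equiv.Perm (Fin k),
      ((1 : Matrix A A ℂ) ⊗ₖ permMatrix B π) * ω * ((1 : Matrix A A ℂ) ⊗ₖ permMatrix B π)ᴴ = ω

/-- `k`-pure extendibility: the state is the marginal of a permutation-invariant pure state. -/
def IsKPureExtendible {A B : Type*} [Fintype A] [DecidableEq A] [Fintype B]
    {k : ℕ} (hk : 0 < k) (ρ : Matrix (A × B) (A × B) ℂ) : Prop :=
  ∃ ψ : (A × (Fin k → B)) → ℂ,
    (∑ x, Complex.normSq (ψ x)) = 1 ∧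
    (∀ π : Equiv.Perm (Fin k),
      ((1 : Matrix A A ℂ) ⊗ₖ permMatrix B π) * Matrix.vecMulVec ψ (star ψ) *
        ((1 : Matrix A A ℂ) ⊗ₖ permMatrix B π)ᴴ = Matrix.vecMulVec ψ (star ψ)) ∧
    marginalAt ⟨0, hk⟩ (Matrix.vecMulVec ψ (star ψ)) = ρ

/-- The maximally entangled state `(1/|T|) ∑_{i,j} |ii⟩⟨jj|` on `T ⊗ T`. -/
def maxEnt (T : Type*) [Fintype T] [DecidableEq T] : Matrix (T × T) (T × T) ℂ :=
  Matrix.of fun p q => if p.1 = p.2 ∧ q.1 = q.2 then ((Fintype.card T : ℂ))⁻¹ else 0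

/-- The square root of a positive semidefinite matrix, as in the older Mathlib (since removed). -/
def Matrix.PosSemidef.sqrt {n : Type*} [Fintype n] [DecidableEq n] {A : Matrix n n ℂ}
    (hA : A.PosSemidef) : Matrix n n ℂ :=
  (hA.1.eigenvectorUnitary : Matrix n n ℂ) * diagonal ((↑) ∘ Real.sqrt ∘ hA.1.eigenvalues) *
    (star hA.1.eigenvectorUnitary : Matrix n n ℂ)

/-- Square root of a positive semidefinite matrix (junk value `0` off the PSD cone). -/
def psqrt {n : Type*} [Fintype n] [DecidableEq n] (A : Matrix n n ℂ) : Matrix n n ℂ :=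
  if h : A.PosSemidef then h.sqrt else 0

/-- Fidelity of states: `F(ρ,σ) = (Tr √(√σ ρ √σ))²`. -/
def fidelity {n : Type*} [Fintype n] [DecidableEq n] (ρ σ : Matrix n n ℂ) : ℝ :=
  ((psqrt (psqrt σ * ρ * psqrt σ)).trace).re ^ 2

/-- Partial trace over the second tensor factor. -/
def ptraceRight {α β : Type*} [Fintype β] (M : Matrix (α × β) (α × β) ℂ) :
    Matrix α α ℂ :=
  Matrix.of fun a a' => ∑ b, M (a, b) (a', b)

/-- A twisting unitary `V = ∑_i I_A ⊗ |i⟩⟨i|_B ⊗ U^i_{A'B'}` (the shield system `S = A'B'`). -/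
def IsTwistingUnitary {d : ℕ} {S : Type*} [Fintype S]
    (V : Matrix ((Fin d × Fin d) × S) ((Fin d × Fin d) × S) ℂ) : Prop :=
  ∃ U : Fin d → Matrix S S ℂ,
    (∀ i, (U i)ᴴ * U i = 1 ∧ U i * (U i)ᴴ = 1) ∧
    V = Matrix.of fun p q => if p.1 = q.1 then (U p.1.2) p.2 q.2 else 0

/-- The privacy test `Π^γ = V (Φ^d ⊗ I) V†` associated with a twisting unitary `V`. -/
def privacyTest {d : ℕ} {S : Type*} [Fintype S] [DecidableEq S]
    (V : Matrix ((Fin d × Fin d) × S) ((Fin d × Fin d) × S) ℂ) :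
    Matrix ((Fin d × Fin d) × S) ((Fin d × Fin d) × S) ℂ :=
  V * (maxEnt (Fin d) ⊗ₖ (1 : Matrix S S ℂ)) * Vᴴ

/-- A private state of `log₂ d` secret bits: `γ = V (Φ^d ⊗ τ) V†`. -/
def IsPrivateState {d : ℕ} {SA SB : Type*} [Fintype SA] [Fintype SB]
    (γ : Matrix ((Fin d × Fin d) × (SA × SB)) ((Fin d × Fin d) × (SA × SB)) ℂ) : Prop :=
  ∃ (V : Matrix ((Fin d × Fin d) × (SA × SB)) ((Fin d × Fin d) × (SA × SB)) ℂ)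
    (τ : Matrix (SA × SB) (SA × SB) ℂ),
    IsTwistingUnitary V ∧ IsState τ ∧ γ = V * (maxEnt (Fin d) ⊗ₖ τ) * Vᴴ

/-- The ε-hypothesis-testing relative entropy `D^ε_H(ρ‖σ)`. -/
def DH {n : Type*} [Fintype n] [DecidableEq n] (ε : ℝ) (ρ σ : Matrix n n ℂ) : ℝ :=
  -Real.logb 2 (sInf { x : ℝ | ∃ Λ : Matrix n n ℂ, Λ.PosSemidef ∧
      ((1 : Matrix n n ℂ) - Λ).PosSemidef ∧
      1 - ε ≤ ((Λ * ρ).trace).re ∧ x = ((Λ * σ).trace).re })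

/-- The `k`-unextendible hypothesis-testing divergence of a bipartite state. -/
def EHk {A B : Type*} [Fintype A] [DecidableEq A] [Fintype B] [DecidableEq B]
    {k : ℕ} (hk : 0 < k) (ε : ℝ) (ρ : Matrix (A × B) (A × B) ℂ) : ℝ :=
  sInf { x : ℝ | ∃ σ : Matrix (A × B) (A × B) ℂ, IsKExtendible hk σ ∧ x = DH ε ρ σ }

/-- `id_R ⊗ Φ` applied entrywise via the blocks of `M`. -/
def tensorId {R n m : Type*} (Φ : Matrix n n ℂ → Matrix m m ℂ)
    (M : Matrix (R × n) (R × n) ℂ) : Matrix (R × m) (R × m) ℂ :=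
  Matrix.of fun p q => Φ (Matrix.of fun i j => M (p.1, i) (q.1, j)) p.2 q.2

/-- `Φ ⊗ id_R` applied entrywise via the blocks of `M`. -/
def idTensor {R n m : Type*} (Φ : Matrix n n ℂ → Matrix m m ℂ)
    (M : Matrix (n × R) (n × R) ℂ) : Matrix (m × R) (m × R) ℂ :=
  Matrix.of fun p q => Φ (Matrix.of fun i j => M (i, p.2) (j, q.2)) p.1 q.1

/-- Tensor product `E ⊗ F` of two maps on matrices. -/
def prodMap {A B A' B' : Type*} (E : Matrix A A ℂ → Matrix A' A' ℂ)
    (F : Matrix B B ℂ → Matrix B' B' ℂ)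
    (M : Matrix (A × B) (A × B) ℂ) : Matrix (A' × B') (A' × B') ℂ :=
  idTensor E (tensorId F M)

/-- Linearity of a map on matrices. -/
def IsLinearMat {n m : Type*} (Φ : Matrix n n ℂ → Matrix m m ℂ) : Prop :=
  ∀ (c : ℂ) (M N : Matrix n n ℂ), Φ (c • M + N) = c • Φ M + Φ N

/-- Complete positivity of a linear map on matrices. -/
def IsCPMap {n m : Type*} [Fintype n] [Fintype m] (Φ : Matrix n n ℂ → Matrix m m ℂ) : Prop :=
  IsLinearMat Φ ∧ ∀ (r : ℕ) (M : Matrix (Fin r × n) (Fin r × n) ℂ),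
    M.PosSemidef → (tensorId Φ M).PosSemidef

/-- A quantum channel: a completely positive trace-preserving linear map. -/
def IsChannel {n m : Type*} [Fintype n] [Fintype m] (Φ : Matrix n n ℂ → Matrix m m ℂ) : Prop :=
  IsCPMap Φ ∧ ∀ M : Matrix n n ℂ, (Φ M).trace = M.trace

/-- A one-way LOCC channel `∑_x E^x ⊗ F^x` from `A ⊗ B` to `A' ⊗ B'`. -/
def IsOneWayLOCC {A B A' B' : Type*} [Fintype A] [Fintype B] [Fintype A'] [Fintype B']
    (L : Matrix (A × B) (A × B) ℂ → Matrix (A' × B') (A' × B') ℂ) : Prop :=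
  ∃ (m : ℕ) (E : Fin m → (Matrix A A ℂ → Matrix A' A' ℂ))
    (F : Fin m → (Matrix B B ℂ → Matrix B' B' ℂ)),
    (∀ x, IsCPMap (E x)) ∧
    (∀ M : Matrix A A ℂ, (∑ x, E x M).trace = M.trace) ∧
    (∀ x, IsChannel (F x)) ∧
    ∀ M, L M = ∑ x, prodMap (E x) (F x) M

/-- The Choi state of a channel `N : A → B`. -/
def choiState {A B : Type*} [Fintype A] [DecidableEq A]
    (N : Matrix A A ℂ → Matrix B B ℂ) : Matrix (A × B) (A × B) ℂ :=
  tensorId N (maxEnt A)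

/-- Hypothesis-testing divergence of channels: sup over reference systems and input states. -/
def chDivH {A B : Type*} [Fintype A] [Fintype B] [DecidableEq B] (ε : ℝ)
    (N M : Matrix A A ℂ → Matrix B B ℂ) : ℝ :=
  sSup { x : ℝ | ∃ (r : ℕ) (ρ : Matrix (Fin r × A) (Fin r × A) ℂ),
    IsState ρ ∧ x = DH ε (tensorId N ρ) (tensorId M ρ) }

/-- The `k`-unextendible hypothesis-testing divergence of a channel. -/
def EHkCh {A B : Type*} [Fintype A] [DecidableEq A] [Fintype B] [DecidableEq B]
    {k : ℕ} (hk : 0 < k) (ε : ℝ) (N : Matrix A A ℂ → Matrix B B ℂ) : ℝ :=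
  sInf { x : ℝ | ∃ M : Matrix A A ℂ → Matrix B B ℂ,
    IsChannel M ∧ IsKExtendible hk (choiState M) ∧ x = chDivH ε N M }

/-- Real power of a Hermitian matrix by functional calculus on its support
(zero eigenvalues are sent to zero; junk value `0` for non-Hermitian input). -/
def mpow {n : Type*} [Fintype n] [DecidableEq n] (A : Matrix n n ℂ) (r : ℝ) :
    Matrix n n ℂ :=
  if hA : A.IsHermitian then
    (hA.eigenvectorUnitary : Matrix n n ℂ) *
      Matrix.diagonal (fun i =>
        if hA.eigenvalues i = 0 then (0 : ℂ) else ((hA.eigenvalues i ^ r : ℝ) : ℂ)) *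
      (star hA.eigenvectorUnitary : Matrix n n ℂ)
  else 0

/-- The sandwiched Rényi relative entropy `D̃_α(ρ‖σ)`. -/
def sandwichedRenyi {n : Type*} [Fintype n] [DecidableEq n] (α : ℝ)
    (ρ σ : Matrix n n ℂ) : ℝ :=
  (α - 1)⁻¹ * Real.logb 2
    ((mpow (mpow σ ((1 - α) / (2 * α)) * ρ * mpow σ ((1 - α) / (2 * α))) α).trace).re

/-- The `k`-unextendible sandwiched Rényi divergence of a bipartite state. -/
def sandEk {A B : Type*} [Fintype A] [DecidableEq A] [Fintype B] [DecidableEq B]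
    {k : ℕ} (hk : 0 < k) (α : ℝ) (ρ : Matrix (A × B) (A × B) ℂ) : ℝ :=
  sInf { x : ℝ | ∃ σ : Matrix (A × B) (A × B) ℂ,
    IsKExtendible hk σ ∧ x = sandwichedRenyi α ρ σ }

/-- Sandwiched Rényi divergence of channels. -/
def sandDivCh {A B : Type*} [Fintype A] [Fintype B] [DecidableEq B] (α : ℝ)
    (N M : Matrix A A ℂ → Matrix B B ℂ) : ℝ :=
  sSup { x : ℝ | ∃ (r : ℕ) (ρ : Matrix (Fin r × A) (Fin r × A) ℂ),
    IsState ρ ∧ x = sandwichedRenyi α (tensorId N ρ) (tensorId M ρ) }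

/-- The `k`-unextendible sandwiched Rényi divergence of a channel. -/
def sandEkCh {A B : Type*} [Fintype A] [DecidableEq A] [Fintype B] [DecidableEq B]
    {k : ℕ} (hk : 0 < k) (α : ℝ) (N : Matrix A A ℂ → Matrix B B ℂ) : ℝ :=
  sInf { x : ℝ | ∃ M : Matrix A A ℂ → Matrix B B ℂ,
    IsChannel M ∧ IsKExtendible hk (choiState M) ∧ x = sandDivCh α N M }

/-- The geometric Rényi relative entropy `D̂_α(ρ‖σ)` (`⊤` if `supp ρ ⊄ supp σ`). -/
def geomRenyi {n : Type*} [Fintype n] [DecidableEq n] (α : ℝ)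
    (ρ σ : Matrix n n ℂ) : EReal :=
  if ∀ v : n → ℂ, σ.mulVec v = 0 → ρ.mulVec v = 0 then
    (((α - 1)⁻¹ * Real.logb 2
      ((σ * mpow (mpow σ (-(1 / 2)) * ρ * mpow σ (-(1 / 2))) α).trace).re : ℝ) : EReal)
  else ⊤

/-- Geometric Rényi divergence of channels. -/
def geomDivCh {A B : Type*} [Fintype A] [Fintype B] [DecidableEq B] (α : ℝ)
    (N M : Matrix A A ℂ → Matrix B B ℂ) : EReal :=
  sSup { x : EReal | ∃ (r : ℕ) (ρ : Matrix (Fin r × A) (Fin r × A) ℂ),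
    IsState ρ ∧ x = geomRenyi α (tensorId N ρ) (tensorId M ρ) }

/-- The `k`-unextendible geometric Rényi divergence of a channel. -/
def geomEkCh {A B : Type*} [Fintype A] [DecidableEq A] [Fintype B] [DecidableEq B]
    {k : ℕ} (hk : 0 < k) (α : ℝ) (N : Matrix A A ℂ → Matrix B B ℂ) : EReal :=
  sInf { x : EReal | ∃ M : Matrix A A ℂ → Matrix B B ℂ,
    IsChannel M ∧ IsKExtendible hk (choiState M) ∧ x = geomDivCh α N M }

/-- The `n`-fold tensor power `ρ^{⊗n}` of a bipartite state, with the partition `A^n : B^n`. -/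
def statePow {A B : Type*} (ρ : Matrix (A × B) (A × B) ℂ) (n : ℕ) :
    Matrix ((Fin n → A) × (Fin n → B)) ((Fin n → A) × (Fin n → B)) ℂ :=
  Matrix.of fun p q => ∏ i, ρ (p.1 i, p.2 i) (q.1 i, q.2 i)

/-- The `n`-fold tensor power `N^{⊗n}` of a channel. -/
def chTensorPow {A B : Type*} [Fintype A] [DecidableEq A]
    (N : Matrix A A ℂ → Matrix B B ℂ) (n : ℕ)
    (M : Matrix (Fin n → A) (Fin n → A) ℂ) : Matrix (Fin n → B) (Fin n → B) ℂ :=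
  Matrix.of fun f g => ∑ p : Fin n → A, ∑ q : Fin n → A,
    M p q * ∏ i, N (Matrix.single (p i) (q i) 1) (f i) (g i)

/-- The `d`-dimensional erasure channel with erasure probability `p`. -/
def erasureCh (d : ℕ) (p : ℝ) (ρ : Matrix (Fin d) (Fin d) ℂ) :
    Matrix (Fin (d + 1)) (Fin (d + 1)) ℂ :=
  Matrix.of fun i j =>
    if hi : (i : ℕ) < d then
      (if hj : (j : ℕ) < d then ((1 - p : ℝ) : ℂ) * ρ ⟨i, hi⟩ ⟨j, hj⟩ else 0)
    else (if (j : ℕ) < d then 0 else (p : ℂ) * ρ.trace)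

/-- `n`-fold product of the Bernoulli distribution `(x, y)` (`false ↦ x`, `true ↦ y`). -/
def bernProd (x y : ℝ) (n : ℕ) : (Fin n → Bool) → ℝ :=
  fun f => ∏ i, if f i then y else x

/-- The classical ε-hypothesis-testing relative entropy. -/
def DHclassical {X : Type*} [Fintype X] (ε : ℝ) (P Q : X → ℝ) : ℝ :=
  -Real.logb 2 (sInf { x : ℝ | ∃ t : X → ℝ,
    (∀ i, 0 ≤ t i ∧ t i ≤ 1) ∧ 1 - ε ≤ ∑ i, t i * P i ∧ x = ∑ i, t i * Q i })

/-- Reordering `(X × K) × B ≃ K × (B × X)` used in forward-assisted protocols. -/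
def protoReorder (X K B : Type*) : ((X × K) × B) ≃ (K × (B × X)) where
  toFun p := (p.1.2, (p.2, p.1.1))
  invFun q := ((q.2.2, q.1), q.2.1)
  left_inv _ := rfl
  right_inv _ := rfl

/-- The output of a one-shot forward-assisted secret-key protocol: the cq input state
`∑_x p_x |x⟩⟨x|_X ⊗ ρ^x_{A'A''A}` is sent through `id ⊗ N` and decoded by `D_{BX→B'B''}`. -/
def protocolOutput {A B : Type*} {m d : ℕ} {SA SB : Type*}
    (N : Matrix A A ℂ → Matrix B B ℂ)
    (pr : Fin m → ℝ)
    (ρx : Fin m → Matrix ((Fin d × SA) × A) ((Fin d × SA) × A) ℂ)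
    (D : Matrix (B × Fin m) (B × Fin m) ℂ → Matrix (Fin d × SB) (Fin d × SB) ℂ) :
    Matrix ((Fin d × SA) × (Fin d × SB)) ((Fin d × SA) × (Fin d × SB)) ℂ :=
  tensorId D (Matrix.reindex (protoReorder (Fin m) (Fin d × SA) B)
    (protoReorder (Fin m) (Fin d × SA) B)
    (tensorId N (Matrix.of fun (p q : (Fin m × (Fin d × SA)) × A) =>
      if p.1.1 = q.1.1 then (pr p.1.1 : ℂ) * ρx p.1.1 (p.1.2, p.2) (q.1.2, q.2) else 0)))

/-- The Choi state of the `d`-dimensional erasure channel with erasure probability `1 - 1/k`: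
`(1/k) Φ^d + (1 - 1/k)(I/d) ⊗ |e⟩⟨e|`. -/
def erasureChoi (d k : ℕ) : Matrix (Fin d × Fin (d + 1)) (Fin d × Fin (d + 1)) ℂ :=
  Matrix.of fun p q =>
    (k : ℂ)⁻¹ * ((d : ℂ)⁻¹ *
      (if p.2 = Fin.castSucc p.1 ∧ q.2 = Fin.castSucc q.1 then 1 else 0)) +
    (1 - (k : ℂ)⁻¹) * ((d : ℂ)⁻¹ *
      (if p.1 = q.1 ∧ p.2 = Fin.last d ∧ q.2 = Fin.last d then 1 else 0))

/-- The explicit `k`-extension `(1/k) ∑_i Φ^d_{AB_i} ⊗ (⊗_{j≠i} |e⟩⟨e|_{B_j})`. -/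
def erasureExt (d k : ℕ) :
    Matrix (Fin d × (Fin k → Fin (d + 1))) (Fin d × (Fin k → Fin (d + 1))) ℂ :=
  Matrix.of fun p q => (k : ℂ)⁻¹ * ∑ i : Fin k,
    ((if p.2 i = Fin.castSucc p.1 ∧ q.2 i = Fin.castSucc q.1 then (d : ℂ)⁻¹ else 0) *
      ∏ j ∈ Finset.univ.erase i,
        (if p.2 j = Fin.last d ∧ q.2 j = Fin.last d then 1 else 0))

end

/-!
Write `|Ψ⟩ = ∑ᵢ |ψᵢ⟩` with `|ψᵢ⟩ = V_{AB_iA'B'_i}(|Φ^d⟩ ⊗ |φ^i⟩)`. Each `|ψᵢ⟩` is a unit vector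
supported on the classical indices with `b_i = a`. For `j ≠ i` the register `B_j` is untouched
by `V_{AB_iA'B'_i}` and `|Φ^d⟩_{AB_i}` makes `a` uniform, so the part of `|ψᵢ⟩` with `b_j = a`
has squared norm `1/d`. Since `⟨ψᵢ|ψⱼ⟩` only sees indices with `b_i = b_j = a`, Cauchy–Schwarz
gives `|⟨ψᵢ|ψⱼ⟩| ≤ 1/d`, and expanding `⟨Ψ|Ψ⟩` into the `k` diagonal and `k(k-1)` off-diagonal
terms gives the bound.
-/

theorem norm_sum_sq_le_of_norm_inner_le {𝕜 E ι : Type*} [RCLike 𝕜] [SeminormedAddCommGroup E]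
    [InnerProductSpace 𝕜 E] [Fintype ι] (v : ι → E) {ε : ℝ} (hv : ∀ i, ‖v i‖ ≤ 1)
    (hε : ∀ i j, i ≠ j → ‖inner 𝕜 (v i) (v j)‖ ≤ ε) :
    ‖∑ i, v i‖ ^ 2 ≤ Fintype.card ι * (1 + (Fintype.card ι - 1) * ε) := by
  classical
  have hrow (i : ι) : ∑ j, (if i = j then 1 else ε) = 1 + (Fintype.card ι - 1) * ε := by
    rw [Fintype.sum_eq_add_sum_compl i, if_pos rfl,
      Finset.sum_congr rfl fun j hj => if_neg (by simpa [eq_comm] using hj),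
      Finset.sum_const, Finset.card_compl, Finset.card_singleton, nsmul_eq_mul,
      Nat.cast_sub (Fintype.card_pos_iff.mpr ⟨i⟩)]
    simp
  calc ‖∑ i, v i‖ ^ 2 = ∑ i, ∑ j, RCLike.re (inner 𝕜 (v i) (v j)) := by
        rw [← inner_self_eq_norm_sq (𝕜 := 𝕜), sum_inner]
        simp only [inner_sum, map_sum]
    _ ≤ ∑ i : ι, ∑ j, (if i = j then 1 else ε) := by
        gcongr with i _ j _
        split_ifs with hij
        · rw [hij, inner_self_eq_norm_sq]
          exact pow_le_one₀ (norm_nonneg _) (hv j)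
        · exact (RCLike.re_le_norm _).trans (hε i j hij)
    _ = Fintype.card ι * (1 + (Fintype.card ι - 1) * ε) := by
        simp only [hrow, Finset.sum_const, Finset.card_univ, nsmul_eq_mul]

theorem EuclideanSpace.norm_inner_le_of_support {𝕜 ι : Type*} [RCLike 𝕜] [Fintype ι]
    (u v : EuclideanSpace 𝕜 ι) (p q : ι → Prop) [DecidablePred p] [DecidablePred q]
    (hu : ∀ x, ¬ p x → u x = 0) (hv : ∀ x, ¬ q x → v x = 0) :
    ‖inner 𝕜 u v‖ ≤ √(∑ x with q x, ‖u x‖ ^ 2) * √(∑ x with p x, ‖v x‖ ^ 2) := by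
  have hpointwise (x : ι) :
      ‖u x‖ * ‖v x‖ = (if q x then ‖u x‖ else 0) * (if p x then ‖v x‖ else 0) := by
    by_cases hq : q x <;> by_cases hp : p x <;> simp [hp, hq, hu, hv]
  calc ‖inner 𝕜 u v‖ ≤ ∑ x, ‖u x‖ * ‖v x‖ := by
        rw [PiLp.inner_apply]
        refine (norm_sum_le _ _).trans_eq (Finset.sum_congr rfl fun x _ => ?_)
        rw [RCLike.inner_apply', norm_mul, RCLike.norm_conj]
    _ ≤ _ := by
        simp_rw [hpointwise]
        refine (Real.sum_mul_le_sqrt_mul_sqrt _ _ _).trans_eq ?_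
        simp [Finset.sum_filter, ite_pow]

theorem sum_norm_sq_mulVec_of_conjTranspose_mul_self {𝕜 n : Type*} [RCLike 𝕜] [Fintype n]
    [DecidableEq n] (M : Matrix n n 𝕜) (hM : Mᴴ * M = 1) (v : n → 𝕜) :
    ∑ x, ‖(M *ᵥ v) x‖ ^ 2 = ∑ x, ‖v x‖ ^ 2 := by
  have hdot (w : n → 𝕜) : star w ⬝ᵥ w = ((∑ x, ‖w x‖ ^ 2 : ℝ) : 𝕜) := by
    simp [dotProduct, RCLike.conj_mul]
  have h : star (M *ᵥ v) ⬝ᵥ (M *ᵥ v) = star v ⬝ᵥ v := by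
    rw [star_mulVec, dotProduct_mulVec, vecMul_vecMul, hM, vecMul_one]
  exact_mod_cast (hdot _).symm.trans (h.trans (hdot v))

/-- `M` acting on the factor `α ⊗ β_i` of `α ⊗ β^ι` preserves norms. -/
theorem sum_norm_sq_mulVec_update {𝕜 α β ι : Type*} [RCLike 𝕜] [Fintype α] [DecidableEq α]
    [Fintype β] [DecidableEq β] [Fintype ι] [DecidableEq ι]
    (M : Matrix (α × β) (α × β) 𝕜) (hM : Mᴴ * M = 1) (i : ι) (ψ : α × (ι → β) → 𝕜) :
    ∑ p : α × (ι → β), ‖∑ t : α × β, M (p.1, p.2 i) t * ψ (t.1, Function.update p.2 i t.2)‖ ^ 2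
      = ∑ p, ‖ψ p‖ ^ 2 := by
  let e : α × (ι → β) ≃ (α × β) × ({j // j ≠ i} → β) :=
    ((Equiv.refl α).prodCongr (Equiv.funSplitAt i β)).trans (Equiv.prodAssoc _ _ _).symm
  have he_apply (s : α × β) (r : {j // j ≠ i} → β) : (e.symm (s, r)).2 i = s.2 := by
    simp [e]
  have he_update (s : α × β) (r : {j // j ≠ i} → β) (t : α × β) :
      (t.1, Function.update (e.symm (s, r)).2 i t.2) = e.symm (t, r) := by
    ext j
    · rfl
    · by_cases hj : j = i
      · subst hj; simp [e]
      · simp [e, hj]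
  rw [← e.symm.sum_comp, ← e.symm.sum_comp, Fintype.sum_prod_type_right,
    Fintype.sum_prod_type_right (f := fun p => ‖ψ (e.symm p)‖ ^ 2)]
  refine Finset.sum_congr rfl fun r _ => ?_
  rw [← sum_norm_sq_mulVec_of_conjTranspose_mul_self M hM fun t => ψ (e.symm (t, r))]
  simp only [he_apply, he_update, mulVec, dotProduct]
  rfl

theorem sum_ite_apply_eq_apply_smul {ι β M : Type*} [Fintype ι] [DecidableEq ι] [Fintype β]
    [DecidableEq β] [AddCommMonoid M] (i j : ι) (N : ({j' // j' ≠ i} → β) → M) :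
    ∑ f : ι → β, (if f j = f i then N (fun j' => f j') else 0)
      = (if i = j then Fintype.card β else 1) • ∑ r, N r := by
  let e := Equiv.funSplitAt i β
  by_cases hij : i = j
  · subst hij
    calc ∑ f : ι → β, (if f i = f i then N (fun j' => f j') else 0)
        = ∑ f, N (e f).2 := by simp [e]
      _ = ∑ p : β × ({j' // j' ≠ i} → β), N p.2 := e.sum_comp fun p => N p.2
      _ = _ := by simp [Fintype.sum_prod_type, Finset.card_univ]
  · calc ∑ f : ι → β, (if f j = f i then N (fun j' => f j') else 0)
        = ∑ f, if (e f).2 ⟨j, Ne.symm hij⟩ = (e f).1 then N (e f).2 else 0 := rfl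
      _ = ∑ p : β × ({j' // j' ≠ i} → β), if p.2 ⟨j, Ne.symm hij⟩ = p.1 then N p.2 else 0 :=
          e.sum_comp fun p => if p.2 ⟨j, Ne.symm hij⟩ = p.1 then N p.2 else 0
      _ = _ := by simp [Fintype.sum_prod_type_right, hij]

section TwistedBranch

variable {d k : ℕ} {A' B' : Type*} [Fintype A'] [Fintype B']

/-- The vector `V_{AB_iA'B'_i}(|Φ^d⟩_{AB_i} ⊗ |φ^i⟩)`, indexed by `(a, f, c, g) ∈ A × B × A' × B'`
with `B = B_1 ⋯ B_k`, `B' = B'_1 ⋯ B'_k`. -/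
noncomputable def twistedBranch (U : Fin d → Matrix (A' × B') (A' × B') ℂ)
    (φ : (i : Fin k) → (A' × (Fin k → B') × ({j : Fin k // j ≠ i} → Fin d)) → ℂ) (i : Fin k) :
    EuclideanSpace ℂ (Fin d × (Fin k → Fin d) × A' × (Fin k → B')) :=
  WithLp.toLp 2 fun x => ∑ c : A', ∑ y : B', (U x.1) (x.2.2.1, x.2.2.2 i) (c, y) *
    ((if x.2.1 i = x.1 then (((Real.sqrt d)⁻¹ : ℝ) : ℂ) else 0) *
      φ i (c, Function.update x.2.2.2 i y, fun j => x.2.1 j.1))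

variable (U : Fin d → Matrix (A' × B') (A' × B') ℂ)
  (φ : (i : Fin k) → (A' × (Fin k → B') × ({j : Fin k // j ≠ i} → Fin d)) → ℂ)

theorem norm_sq_twistedBranch_apply (i : Fin k)
    (x : Fin d × (Fin k → Fin d) × A' × (Fin k → B')) :
    ‖twistedBranch U φ i x‖ ^ 2 = (if x.2.1 i = x.1 then (d : ℝ)⁻¹ else 0) *
      ‖∑ t : A' × B', U x.1 (x.2.2.1, x.2.2.2 i) t *
        φ i (t.1, Function.update x.2.2.2 i t.2, fun j => x.2.1 j.1)‖ ^ 2 := by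
  have hfactor : twistedBranch U φ i x =
      (if x.2.1 i = x.1 then (((Real.sqrt d)⁻¹ : ℝ) : ℂ) else 0) *
        ∑ t : A' × B', U x.1 (x.2.2.1, x.2.2.2 i) t *
          φ i (t.1, Function.update x.2.2.2 i t.2, fun j => x.2.1 j.1) := by
    simp only [twistedBranch, Fintype.sum_prod_type, Finset.mul_sum]
    exact Finset.sum_congr rfl fun c _ => Finset.sum_congr rfl fun y _ => by ring
  rw [hfactor, norm_mul, mul_pow]
  split_ifs <;> simp

theorem twistedBranch_apply_eq_zero {i : Fin k} {x : Fin d × (Fin k → Fin d) × A' × (Fin k → B')}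
    (hx : x.2.1 i ≠ x.1) : twistedBranch U φ i x = 0 := by
  simpa [hx] using norm_sq_twistedBranch_apply U φ i x

variable [DecidableEq A'] [DecidableEq B']

theorem sum_filter_norm_sq_twistedBranch (hU : ∀ m, (U m)ᴴ * U m = 1) (hd : d ≠ 0)
    (i j : Fin k) :
    ∑ x with x.2.1 j = x.1, ‖twistedBranch U φ i x‖ ^ 2
      = (if i = j then 1 else (d : ℝ)⁻¹) * ∑ z, ‖φ i z‖ ^ 2 := by
  set N : ({j' : Fin k // j' ≠ i} → Fin d) → ℝ :=
    fun r => ∑ p : A' × (Fin k → B'), ‖φ i (p.1, p.2, r)‖ ^ 2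
  have hN : ∑ r, N r = ∑ z, ‖φ i z‖ ^ 2 := by
    simp only [N, Fintype.sum_prod_type]
    rw [Finset.sum_comm]
    exact Finset.sum_congr rfl fun c _ => Finset.sum_comm
  calc ∑ x with x.2.1 j = x.1, ‖twistedBranch U φ i x‖ ^ 2
      = ∑ a : Fin d, ∑ f : Fin k → Fin d, (if f j = a then (1 : ℝ) else 0) *
          ((if f i = a then (d : ℝ)⁻¹ else 0) * ∑ p : A' × (Fin k → B'),
            ‖∑ t : A' × B', U a (p.1, p.2 i) t *
              φ i (t.1, Function.update p.2 i t.2, fun j => f j.1)‖ ^ 2) := by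
        simp only [Finset.sum_filter, norm_sq_twistedBranch_apply, Fintype.sum_prod_type,
          Finset.mul_sum, ite_mul, one_mul, zero_mul]
    _ = ∑ a : Fin d, ∑ f : Fin k → Fin d, (if f j = a then (1 : ℝ) else 0) *
          ((if f i = a then (d : ℝ)⁻¹ else 0) * N (fun j' => f j')) := by
        refine Finset.sum_congr rfl fun a _ => Finset.sum_congr rfl fun f _ => ?_
        congr 2
        exact sum_norm_sq_mulVec_update (U a) (hU a) i fun q => φ i (q.1, q.2, fun j => f j)
    _ = (d : ℝ)⁻¹ * ∑ f : Fin k → Fin d, (if f j = f i then N (fun j' => f j') else 0) := by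
        rw [Finset.sum_comm, Finset.mul_sum]
        refine Finset.sum_congr rfl fun f _ => ?_
        split_ifs with h <;> simp [h]
    _ = (if i = j then 1 else (d : ℝ)⁻¹) * ∑ z, ‖φ i z‖ ^ 2 := by
        rw [sum_ite_apply_eq_apply_smul, hN]
        split_ifs <;> simp [nsmul_eq_mul, hd]

theorem norm_sq_twistedBranch (hU : ∀ m, (U m)ᴴ * U m = 1) (hd : d ≠ 0) (i : Fin k) :
    ‖twistedBranch U φ i‖ ^ 2 = ∑ z, ‖φ i z‖ ^ 2 := by
  rw [EuclideanSpace.norm_sq_eq,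
    ← Finset.sum_filter_of_ne (p := fun x => x.2.1 i = x.1) fun x _ hx => ?_,
    sum_filter_norm_sq_twistedBranch U φ hU hd, if_pos rfl, one_mul]
  by_contra hxi
  exact hx (by simp [twistedBranch_apply_eq_zero U φ hxi])

end TwistedBranch

theorem norm_sum_twisted_maxEnt_le_general
    {d k : ℕ} (hd : 1 ≤ d)
    {A' B' : Type*} [Fintype A'] [DecidableEq A'] [Fintype B'] [DecidableEq B']
    (U : Fin d → Matrix (A' × B') (A' × B') ℂ)
    (hU : ∀ m, (U m)ᴴ * U m = 1 ∧ U m * (U m)ᴴ = 1)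
    (φ : (i : Fin k) → (A' × (Fin k → B') × ({j : Fin k // j ≠ i} → Fin d)) → ℂ)
    (hφ : ∀ i, ∑ z, Complex.normSq (φ i z) = 1) :
    ∑ x : Fin d × (Fin k → Fin d) × A' × (Fin k → B'),
      Complex.normSq (∑ i : Fin k, ∑ c : A', ∑ y : B',
        (U x.1) (x.2.2.1, x.2.2.2 i) (c, y) *
          ((if x.2.1 i = x.1 then (((Real.sqrt d)⁻¹ : ℝ) : ℂ) else 0) *
            φ i (c, Function.update x.2.2.2 i y, fun j => x.2.1 j.1)))
      ≤ (k : ℝ) * (1 + ((k : ℝ) - 1) / (d : ℝ)) := by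
  have hd0 : d ≠ 0 := Nat.one_le_iff_ne_zero.mp hd
  have hU' (m : Fin d) : (U m)ᴴ * U m = 1 := (hU m).1
  have hφ' (i : Fin k) : ∑ z, ‖φ i z‖ ^ 2 = 1 := by simpa only [Complex.sq_norm] using hφ i
  have hunit (i : Fin k) : ‖twistedBranch U φ i‖ ≤ 1 := by
    have h := norm_sq_twistedBranch U φ hU' hd0 i
    rw [hφ', pow_eq_one_iff_of_nonneg (norm_nonneg _) two_ne_zero] at h
    exact h.le
  have hcross (i j : Fin k) (hij : i ≠ j) :
      ‖inner ℂ (twistedBranch U φ i) (twistedBranch U φ j)‖ ≤ (d : ℝ)⁻¹ := by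
    refine (EuclideanSpace.norm_inner_le_of_support _ _ (fun x => x.2.1 i = x.1)
      (fun x => x.2.1 j = x.1) (fun _ => twistedBranch_apply_eq_zero U φ)
      (fun _ => twistedBranch_apply_eq_zero U φ)).trans_eq ?_
    rw [sum_filter_norm_sq_twistedBranch U φ hU' hd0, sum_filter_norm_sq_twistedBranch U φ hU' hd0,
      if_neg hij, if_neg (Ne.symm hij), hφ', hφ', mul_one, Real.mul_self_sqrt (by positivity)]
  calc _ = ‖∑ i, twistedBranch U φ i‖ ^ 2 := by
        simp [EuclideanSpace.norm_sq_eq, Complex.sq_norm, twistedBranch]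
    _ ≤ Fintype.card (Fin k) * (1 + (Fintype.card (Fin k) - 1) * (d : ℝ)⁻¹) :=
        norm_sum_sq_le_of_norm_inner_le _ hunit hcross
    _ = _ := by rw [Fintype.card_fin, div_eq_mul_inv]

/-- The norm of `|Ψ⟩ = ∑_i V_{AB_iA'B'_i}(|Φ^d⟩_{AB_i} ⊗ |φ^i⟩)` is at most
`k(1 + (k-1)/d)`. -/
theorem norm_sum_twisted_maxEnt_le
    {d k : ℕ} (hd : 1 ≤ d) (hk : 1 ≤ k)
    {A' B' : Type*} [Fintype A'] [DecidableEq A'] [Fintype B'] [DecidableEq B']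
    (U : Fin d → Matrix (A' × B') (A' × B') ℂ)
    (hU : ∀ m, (U m)ᴴ * U m = 1 ∧ U m * (U m)ᴴ = 1)
    (φ : (i : Fin k) → (A' × (Fin k → B') × ({j : Fin k // j ≠ i} → Fin d)) → ℂ)
    (hφ : ∀ i, ∑ z, Complex.normSq (φ i z) = 1) :
    ∑ x : Fin d × (Fin k → Fin d) × A' × (Fin k → B'),
      Complex.normSq (∑ i : Fin k, ∑ c : A', ∑ y : B',
        (U x.1) (x.2.2.1, x.2.2.2 i) (c, y) *
          ((if x.2.1 i = x.1 then (((Real.sqrt d)⁻¹ : ℝ) : ℂ) else 0) *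
            φ i (c, Function.update x.2.2.2 i y, fun j => x.2.1 j.1)))
      ≤ (k : ℝ) * (1 + ((k : ℝ) - 1) / (d : ℝ)) :=
  norm_sum_twisted_maxEnt_le_general hd U hU φ hφ
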